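/- Let K be a field of characteristic 0 and E a directed graph with E⁰ finite such that the Leavitt path algebra L_K(E) is noncommutative. Then the multiplicative group L_K(E)^× of units of L_K(E) contains a non-cyclic free subgroup; that is, there exist units a, b of L_K(E) such that the group homomorphism from the free group on two generators to L_K(E)^× sending the two generators to a and b, respectively, is injective. -/

import Mathlib

/-! Leavitt path algebra of a directed graph with finitely many vertices.
The graph is given by types `V` (vertices), `E` (edges) and maps `src rng : E → V`. -/

/-- A vertex is a sink if it emits no edges. -/
def IsSink {V E : Type} (src : E → V) (v : V) : Prop := ∀ e : E, src e ≠ v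

/-- A vertex is an infinite emitter if it emits infinitely many edges. -/
def IsInfEmitter {V E : Type} (src : E → V) (v : V) : Prop :=
  {e : E | src e = v}.Infinite

/-- A vertex is regular if it is neither a sink nor an infinite emitter. -/
def IsRegularVertex {V E : Type} (src : E → V) (v : V) : Prop :=
  ¬ IsSink src v ∧ ¬ IsInfEmitter src v

/-- The generator of the free algebra corresponding to a vertex `v`. -/
def vtx (K V E : Type) [Field K] (v : V) : FreeAlgebra K (V ⊕ E ⊕ E) :=
  FreeAlgebra.ι K (Sum.inl v)

/-- The generator of the free algebra corresponding to an edge `e`. -/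
def edg (K V E : Type) [Field K] (e : E) : FreeAlgebra K (V ⊕ E ⊕ E) :=
  FreeAlgebra.ι K (Sum.inr (Sum.inl e))

/-- The generator of the free algebra corresponding to a ghost edge `e*`. -/
def ghe (K V E : Type) [Field K] (e : E) : FreeAlgebra K (V ⊕ E ⊕ E) :=
  FreeAlgebra.ι K (Sum.inr (Sum.inr e))

/-- The defining relations of the Leavitt path algebra `L_K(E)`: (V), (E1), (E2),
(CK1), (CK2), together with `1 = Σ_{v ∈ E⁰} v` (which makes sense as `V` is finite). -/
inductive LeavittRel (K V E : Type) [Field K] [Fintype V] (src rng : E → V) :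
    FreeAlgebra K (V ⊕ E ⊕ E) → FreeAlgebra K (V ⊕ E ⊕ E) → Prop
  | vtx_same (v : V) :
      LeavittRel K V E src rng (vtx K V E v * vtx K V E v) (vtx K V E v)
  | vtx_ne (v v' : V) (h : v ≠ v') :
      LeavittRel K V E src rng (vtx K V E v * vtx K V E v') 0
  | src_edge (e : E) :
      LeavittRel K V E src rng (vtx K V E (src e) * edg K V E e) (edg K V E e)
  | edge_rng (e : E) :
      LeavittRel K V E src rng (edg K V E e * vtx K V E (rng e)) (edg K V E e)
  | rng_ghost (e : E) :
      LeavittRel K V E src rng (vtx K V E (rng e) * ghe K V E e) (ghe K V E e)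
  | ghost_src (e : E) :
      LeavittRel K V E src rng (ghe K V E e * vtx K V E (src e)) (ghe K V E e)
  | ck1_same (e : E) :
      LeavittRel K V E src rng (ghe K V E e * edg K V E e) (vtx K V E (rng e))
  | ck1_ne (e f : E) (h : e ≠ f) :
      LeavittRel K V E src rng (ghe K V E e * edg K V E f) 0
  | ck2 (v : V) (hreg : IsRegularVertex src v) :
      LeavittRel K V E src rng (vtx K V E v)
        (∑ e ∈ (Set.not_infinite.mp hreg.2).toFinset, edg K V E e * ghe K V E e)
  | unit : LeavittRel K V E src rng (∑ v : V, vtx K V E v) 1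

/-- The Leavitt path algebra `L_K(E)` of a graph with finitely many vertices. -/
abbrev LPA (K V E : Type) [Field K] [Fintype V] (src rng : E → V) : Type :=
  RingQuot (LeavittRel K V E src rng)

/-- The image of a vertex `v` in `L_K(E)`. -/
noncomputable def Vtx (K V E : Type) [Field K] [Fintype V] (src rng : E → V) (v : V) :
    LPA K V E src rng :=
  RingQuot.mkAlgHom K (LeavittRel K V E src rng) (vtx K V E v)

/-- The image of an edge `e` in `L_K(E)`. -/
noncomputable def Edg (K V E : Type) [Field K] [Fintype V] (src rng : E → V) (e : E) :
    LPA K V E src rng :=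
  RingQuot.mkAlgHom K (LeavittRel K V E src rng) (edg K V E e)

/-- The image of a ghost edge `e*` in `L_K(E)`. -/
noncomputable def Ghe (K V E : Type) [Field K] [Fintype V] (src rng : E → V) (e : E) :
    LPA K V E src rng :=
  RingQuot.mkAlgHom K (LeavittRel K V E src rng) (ghe K V E e)

/-!
If every edge of `E` is a loop and no two edges share a vertex, `L_K(E)` is commutative.
Otherwise there is an edge `e` with `s(e) ≠ r(e)`, and then `e e*, e, e*, r(e)` is a system of
2 × 2 matrix units, or two distinct edges `e, f` with the same range, and then
`e e*, e f*, f e*, f f*` is one. These are nonzero because `r(e) ≠ 0`, as the representation of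
`L_K(E)` on the span of the boundary paths shows. Matrix units `w` with corner idempotent `p`
embed `GL₂(K)`, hence (as `K` has characteristic zero) `GL₂(ℤ)`, into the units via
`M ↦ (1 - p) + ∑ M i j • w i j`, and by ping-pong the shears `[[1, 3], [0, 1]]` and
`[[1, 0], [3, 1]]` generate a free subgroup of `GL₂(ℤ)`.
-/

namespace Matrix.GeneralLinearGroup

variable {n R : Type*} [Fintype n] [DecidableEq n] [CommRing R]

instance : MulAction (GL n R) {v : n → R // v ≠ 0} where
  smul g v := ⟨(g : Matrix n n R) *ᵥ v.1, fun h =>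
    v.2 (mulVec_injective_of_isUnit g.isUnit (h.trans (mulVec_zero _).symm))⟩
  one_smul v := Subtype.ext (one_mulVec v.1)
  mul_smul g h v := Subtype.ext (mulVec_mulVec v.1 (g : Matrix n n R) h).symm

theorem coe_smul (g : GL n R) (v : {v : n → R // v ≠ 0}) :
    ((g • v : {v : n → R // v ≠ 0}) : n → R) = (g : Matrix n n R) *ᵥ v := rfl

def upperShear (c : R) : GL (Fin 2) R :=
  ⟨!![1, c; 0, 1], !![1, -c; 0, 1], by simp [one_fin_two], by simp [one_fin_two]⟩

def lowerShear (c : R) : GL (Fin 2) R :=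
  ⟨!![1, 0; c, 1], !![1, 0; -c, 1], by simp [one_fin_two], by simp [one_fin_two]⟩

end Matrix.GeneralLinearGroup

namespace Sanov

open Matrix Matrix.GeneralLinearGroup

def shear (c : ℤ) (t : Bool) : GL (Fin 2) ℤ := if t then upperShear c else lowerShear c

/-- The coordinate enlarged by `shear c t`. -/
def lead (t : Bool) : Fin 2 := if t then 0 else 1

abbrev NonzeroVec : Type := {v : Fin 2 → ℤ // v ≠ 0}

/- For `t = true`, in terms of the slope `x = v 0 / v 1`, the ping-pong sets are
`attracting = (1, ∞]` and `repelling = (-∞, -1)`; for `t = false` use `v 1 / v 0` instead. -/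
def dominated (t : Bool) : Set NonzeroVec := {v | v.1 (lead !t) ^ 2 < v.1 (lead t) ^ 2}

def attracting (t : Bool) : Set NonzeroVec := dominated t ∩ {v | 0 ≤ v.1 0 * v.1 1}

def repelling (t : Bool) : Set NonzeroVec := dominated t ∩ {v | v.1 0 * v.1 1 < 0}

theorem shear_smul_lead (c : ℤ) (t : Bool) (v : NonzeroVec) :
    (shear c t • v).1 (lead t) = v.1 (lead t) + c * v.1 (lead !t) ∧
      (shear c t • v).1 (lead !t) = v.1 (lead !t) := by
  cases t <;> simp [shear, lead, upperShear, lowerShear, coe_smul, mulVec, dotProduct,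
    Fin.sum_univ_two]; ring

theorem shear_inv_smul_lead (c : ℤ) (t : Bool) (v : NonzeroVec) :
    ((shear c t)⁻¹ • v).1 (lead t) = v.1 (lead t) - c * v.1 (lead !t) ∧
      ((shear c t)⁻¹ • v).1 (lead !t) = v.1 (lead !t) := by
  cases t <;> simp [shear, lead, upperShear, lowerShear, coe_smul, mulVec, dotProduct,
    Fin.sum_univ_two] <;> ring

theorem lead_mul_lead (t : Bool) (v : Fin 2 → ℤ) : v (lead t) * v (lead !t) = v 0 * v 1 := by
  cases t <;> simp [lead, mul_comm]

theorem lead_ne_zero_or (t : Bool) (v : NonzeroVec) :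
    v.1 (lead t) ≠ 0 ∨ v.1 (lead !t) ≠ 0 := by
  by_contra! h
  refine v.2 (funext fun i => ?_)
  cases t <;> fin_cases i <;> simp_all [lead]

theorem disjoint_dominated {t s : Bool} (h : t ≠ s) : Disjoint (dominated t) (dominated s) := by
  rw [Set.disjoint_left]
  intro v h₁ h₂
  cases t <;> cases s <;> simp_all [dominated, lead] <;> linarith

variable {c : ℤ}

theorem shear_smul_mem_attracting (hc : 3 ≤ c) (t : Bool) {v : NonzeroVec}
    (hv : v ∉ repelling t) : shear c t • v ∈ attracting t := by
  have h₀ := lead_ne_zero_or t v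
  simp only [attracting, repelling, dominated, Set.mem_inter_iff, Set.mem_ofPred_eq,
    ← lead_mul_lead t, (shear_smul_lead c t v).1, (shear_smul_lead c t v).2] at hv ⊢
  generalize v.1 (lead t) = p, v.1 (lead !t) = q at *
  rcases eq_or_ne q 0 with rfl | hq
  · simp_all [sq_pos_of_ne_zero]
  have hpq : - q ^ 2 ≤ p * q := by
    by_contra! hlt
    exact hv ⟨by nlinarith [sq_nonneg (p + q), sq_nonneg (p - q)], by nlinarith [sq_nonneg q]⟩
  have hq2 : 0 < q ^ 2 := by positivity
  have hu : 2 * q ^ 2 ≤ (p + c * q) * q := by nlinarith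
  exact ⟨by nlinarith [sq_nonneg ((p + c * q) * q)], by nlinarith⟩

theorem shear_inv_smul_mem_repelling (hc : 3 ≤ c) (t : Bool) {v : NonzeroVec}
    (hv : v ∉ attracting t) : (shear c t)⁻¹ • v ∈ repelling t := by
  have h₀ := lead_ne_zero_or t v
  simp only [attracting, repelling, dominated, Set.mem_inter_iff, Set.mem_ofPred_eq,
    ← lead_mul_lead t, (shear_inv_smul_lead c t v).1, (shear_inv_smul_lead c t v).2] at hv ⊢
  generalize v.1 (lead t) = p, v.1 (lead !t) = q at *
  rcases eq_or_ne q 0 with rfl | hq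
  · simp_all [sq_pos_of_ne_zero]
  have hpq : p * q ≤ q ^ 2 := by
    by_contra! hlt
    exact hv ⟨by nlinarith [sq_nonneg (p + q), sq_nonneg (p - q)], by nlinarith [sq_nonneg q]⟩
  have hq2 : 0 < q ^ 2 := by positivity
  have hu : (p - c * q) * q ≤ -2 * q ^ 2 := by nlinarith
  exact ⟨by nlinarith [sq_nonneg ((p - c * q) * q)], by nlinarith⟩

theorem injective_lift_shear (hc : 3 ≤ c) : Function.Injective (FreeGroup.lift (shear c)) := by
  refine FreeGroup.injective_lift_of_ping_pong _ attracting repelling (fun t => ?_)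
    (fun t s h => ?_) (fun t s h => ?_) (fun t s => ?_)
    (fun t => Set.smul_set_subset_iff.2 fun _ => shear_smul_mem_attracting hc t)
    (fun t => Set.smul_set_subset_iff.2 fun _ => shear_inv_smul_mem_repelling hc t)
  · refine ⟨⟨Pi.single (lead t) 1, by simp⟩, ?_⟩
    cases t <;> simp [attracting, dominated, lead]
  · exact (disjoint_dominated h).mono Set.inter_subset_left Set.inter_subset_left
  · exact (disjoint_dominated h).mono Set.inter_subset_left Set.inter_subset_left
  · refine Disjoint.mono Set.inter_subset_right Set.inter_subset_right ?_
    exact Set.disjoint_left.2 fun v h₁ h₂ => (not_le.2 h₂ : ¬ 0 ≤ v.1 0 * v.1 1) h₁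

end Sanov

section MatrixUnits

variable {ι K A : Type*} [DecidableEq ι]

def IsMatrixUnits [Mul A] [Zero A] (w : ι → ι → A) : Prop :=
  ∀ i j k l, w i j * w k l = if j = k then w i l else 0

theorem isMatrixUnits_mul [Semiring A] {x y : ι → A} {p : A}
    (hyx : ∀ i j, y i * x j = if i = j then p else 0) (hp : ∀ j, p * y j = y j) :
    IsMatrixUnits fun i j => x i * y j := by
  intro i j k l
  rw [mul_assoc, ← mul_assoc (y j), hyx]
  split_ifs <;> simp [hp]

namespace IsMatrixUnits

variable [Fintype ι] [Field K] [Ring A] [Algebra K A] {w : ι → ι → A} (hw : IsMatrixUnits w)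
include hw

theorem mul_sum_smul (i j : ι) (N : Matrix ι ι K) :
    w i j * ∑ k, ∑ l, N k l • w k l = ∑ l, N j l • w i l := by
  simp [Finset.mul_sum, hw _ _ _ _]

variable (K) in
def toNonUnitalRingHom : Matrix ι ι K →ₙ+* A where
  toFun M := ∑ i, ∑ j, M i j • w i j
  map_zero' := by simp
  map_add' M N := by simp [add_smul, Finset.sum_add_distrib]
  map_mul' M N := by
    simp only [Finset.sum_mul, smul_mul_assoc, hw.mul_sum_smul, Finset.smul_sum, smul_smul,
      Matrix.mul_apply, Finset.sum_smul]
    exact Finset.sum_congr rfl fun i _ => Finset.sum_comm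

theorem toNonUnitalRingHom_apply (M : Matrix ι ι K) :
    hw.toNonUnitalRingHom K M = ∑ i, ∑ j, M i j • w i j := rfl

theorem mul_toNonUnitalRingHom_mul (M : Matrix ι ι K) (i j k : ι) :
    w i j * hw.toNonUnitalRingHom K M * w k i = M j k • w i i := by
  simp [toNonUnitalRingHom_apply, hw.mul_sum_smul, Finset.sum_mul, hw _ _ _ _]

theorem toNonUnitalRingHom_injective {i : ι} (hi : w i i ≠ 0) :
    Function.Injective (hw.toNonUnitalRingHom K) := by
  refine (injective_iff_map_eq_zero _).2 fun M hM => Matrix.ext fun j k => ?_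
  have := hw.mul_toNonUnitalRingHom_mul M i j k
  rw [hM, mul_zero, zero_mul, eq_comm, smul_eq_zero] at this
  exact this.resolve_right hi

end IsMatrixUnits

end MatrixUnits

namespace NonUnitalRingHom

variable {S R : Type*} [Ring S] [Ring R]

/-- The idempotent `1 - f 1` supplies the unit that `f` misses. -/
def unitalize (f : S →ₙ+* R) : S →* R where
  toFun x := (1 - f 1) + f x
  map_one' := by abel
  map_mul' x y := by
    have h₁ : f 1 * f y = f y := by rw [← map_mul, one_mul]
    have h₂ : f x * f 1 = f x := by rw [← map_mul, mul_one]
    have h₃ : f 1 * f 1 = f 1 := by rw [← map_mul, mul_one]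
    simp only [add_mul, mul_add, sub_mul, mul_sub, one_mul, mul_one, h₁, h₂, h₃, map_mul]
    abel

theorem unitalize_injective {f : S →ₙ+* R} (hf : Function.Injective f) :
    Function.Injective f.unitalize := fun _ _ h => hf (add_left_cancel h)

end NonUnitalRingHom

open Matrix.GeneralLinearGroup in
theorem IsMatrixUnits.exists_free_units (K : Type*) {A : Type*} [Field K] [CharZero K]
    [Ring A] [Algebra K A] {w : Fin 2 → Fin 2 → A} (hw : IsMatrixUnits w) {i : Fin 2}
    (hi : w i i ≠ 0) :
    ∃ a b : Aˣ, Function.Injective (FreeGroup.lift fun t : Bool => if t then a else b) := by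
  let Φ : GL (Fin 2) ℤ →* Aˣ :=
    Units.map ((hw.toNonUnitalRingHom K).unitalize.comp (Int.castRingHom K).mapMatrix.toMonoidHom)
  have hΦ : Function.Injective Φ := Units.map_injective <|
    (NonUnitalRingHom.unitalize_injective (hw.toNonUnitalRingHom_injective hi)).comp
      (Matrix.map_injective Int.cast_injective)
  refine ⟨Φ (upperShear 3), Φ (lowerShear 3), ?_⟩
  have : (FreeGroup.lift fun t : Bool => if t then Φ (upperShear 3) else Φ (lowerShear 3)) =
      Φ.comp (FreeGroup.lift (Sanov.shear 3)) :=
    FreeGroup.ext_hom _ _ fun t => by cases t <;> simp [Sanov.shear]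
  rw [this, MonoidHom.coe_comp]
  exact hΦ.comp (Sanov.injective_lift_shear (by norm_num))

namespace LPA

variable {K V E : Type} [Field K] [Fintype V] {src rng : E → V}

theorem Vtx_mul_Vtx [DecidableEq V] (v v' : V) :
    Vtx K V E src rng v * Vtx K V E src rng v' = if v = v' then Vtx K V E src rng v else 0 := by
  split_ifs with h
  · subst h
    exact (map_mul _ _ _).symm.trans (RingQuot.mkAlgHom_rel K (.vtx_same v))
  · exact (map_mul _ _ _).symm.trans
      ((RingQuot.mkAlgHom_rel K (.vtx_ne v v' h)).trans (map_zero _))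

theorem Ghe_mul_Edg [DecidableEq E] (e f : E) :
    Ghe K V E src rng e * Edg K V E src rng f = if e = f then Vtx K V E src rng (rng e) else 0 := by
  split_ifs with h
  · subst h
    exact (map_mul _ _ _).symm.trans (RingQuot.mkAlgHom_rel K (.ck1_same e))
  · exact (map_mul _ _ _).symm.trans
      ((RingQuot.mkAlgHom_rel K (.ck1_ne e f h)).trans (map_zero _))

theorem Vtx_src_mul_Edg (e : E) :
    Vtx K V E src rng (src e) * Edg K V E src rng e = Edg K V E src rng e :=
  (map_mul _ _ _).symm.trans (RingQuot.mkAlgHom_rel K (.src_edge e))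

theorem Edg_mul_Vtx_rng (e : E) :
    Edg K V E src rng e * Vtx K V E src rng (rng e) = Edg K V E src rng e :=
  (map_mul _ _ _).symm.trans (RingQuot.mkAlgHom_rel K (.edge_rng e))

theorem Vtx_rng_mul_Ghe (e : E) :
    Vtx K V E src rng (rng e) * Ghe K V E src rng e = Ghe K V E src rng e :=
  (map_mul _ _ _).symm.trans (RingQuot.mkAlgHom_rel K (.rng_ghost e))

theorem Ghe_mul_Vtx_src (e : E) :
    Ghe K V E src rng e * Vtx K V E src rng (src e) = Ghe K V E src rng e :=
  (map_mul _ _ _).symm.trans (RingQuot.mkAlgHom_rel K (.ghost_src e))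

theorem Vtx_eq_sum_Edg_mul_Ghe (v : V) (hv : IsRegularVertex src v) :
    Vtx K V E src rng v = ∑ e ∈ (Set.not_infinite.mp hv.2).toFinset,
      Edg K V E src rng e * Ghe K V E src rng e :=
  (RingQuot.mkAlgHom_rel K (.ck2 v hv)).trans (by simp [Edg, Ghe])

theorem Vtx_mul_Edg [DecidableEq V] (v : V) (e : E) :
    Vtx K V E src rng v * Edg K V E src rng e = if v = src e then Edg K V E src rng e else 0 := by
  split_ifs with h
  · rw [h, Vtx_src_mul_Edg]
  · rw [← Vtx_src_mul_Edg, ← mul_assoc, Vtx_mul_Vtx, if_neg h, zero_mul]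

theorem Edg_mul_Vtx [DecidableEq V] (v : V) (e : E) :
    Edg K V E src rng e * Vtx K V E src rng v = if v = rng e then Edg K V E src rng e else 0 := by
  split_ifs with h
  · rw [h, Edg_mul_Vtx_rng]
  · rw [← Edg_mul_Vtx_rng, mul_assoc, Vtx_mul_Vtx, if_neg (Ne.symm h), mul_zero]

theorem Vtx_mul_Ghe [DecidableEq V] (v : V) (e : E) :
    Vtx K V E src rng v * Ghe K V E src rng e = if v = rng e then Ghe K V E src rng e else 0 := by
  split_ifs with h
  · rw [h, Vtx_rng_mul_Ghe]
  · rw [← Vtx_rng_mul_Ghe, ← mul_assoc, Vtx_mul_Vtx, if_neg h, zero_mul]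

theorem Ghe_mul_Vtx [DecidableEq V] (v : V) (e : E) :
    Ghe K V E src rng e * Vtx K V E src rng v = if v = src e then Ghe K V E src rng e else 0 := by
  split_ifs with h
  · rw [h, Ghe_mul_Vtx_src]
  · rw [← Ghe_mul_Vtx_src, mul_assoc, Vtx_mul_Vtx, if_neg (Ne.symm h), mul_zero]

end LPA

/-- A boundary path: `edge n = none` means the path has length at most `n`, and a finite path
must end at a vertex that is not regular. -/
@[ext]
structure BoundaryPath {V E : Type} (src rng : E → V) where
  start : V
  edge : ℕ → Option E
  src_edge_zero : ∀ e, edge 0 = some e → src e = start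
  edge_succ : ∀ n e, edge (n + 1) = some e → ∃ f, edge n = some f ∧ rng f = src e
  not_regular_start : edge 0 = none → ¬ IsRegularVertex src start
  not_regular_end :
    ∀ n e, edge n = some e → edge (n + 1) = none → ¬ IsRegularVertex src (rng e)

namespace BoundaryPath

variable {V E : Type} {src rng : E → V}

open scoped Classical

def cons (e : E) (p : BoundaryPath src rng) (h : p.start = rng e) : BoundaryPath src rng where
  start := src e
  edge
    | 0 => some e
    | n + 1 => p.edge n
  src_edge_zero _ he := by cases he; rfl
  edge_succ
    | 0, _, he => ⟨e, rfl, h ▸ (p.src_edge_zero _ he).symm⟩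
    | n + 1, _, he => p.edge_succ n _ he
  not_regular_start h0 := by cases h0
  not_regular_end
    | 0, _, he, hn => by cases he; exact h ▸ p.not_regular_start hn
    | n + 1, _, he, hn => p.not_regular_end n _ he hn

def tail (p : BoundaryPath src rng) (e : E) (h : p.edge 0 = some e) : BoundaryPath src rng where
  start := rng e
  edge n := p.edge (n + 1)
  src_edge_zero f hf := by
    obtain ⟨g, hg, hgf⟩ := p.edge_succ 0 f hf
    cases h.symm.trans hg
    exact hgf.symm
  edge_succ n := p.edge_succ (n + 1)
  not_regular_start := p.not_regular_end 0 e h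
  not_regular_end n := p.not_regular_end (n + 1)

@[simp]
theorem cons_start (e : E) (p : BoundaryPath src rng) (h : p.start = rng e) :
    (p.cons e h).start = src e := rfl

@[simp]
theorem cons_edge_zero (e : E) (p : BoundaryPath src rng) (h : p.start = rng e) :
    (p.cons e h).edge 0 = some e := rfl

@[simp]
theorem tail_start (p : BoundaryPath src rng) (e : E) (h : p.edge 0 = some e) :
    (p.tail e h).start = rng e := rfl

theorem cons_tail (p : BoundaryPath src rng) (e : E) (h : p.edge 0 = some e) :
    (p.tail e h).cons e rfl = p := by
  ext1
  · exact p.src_edge_zero e h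
  · funext n
    cases n
    · exact h.symm
    · rfl

theorem tail_cons (p : BoundaryPath src rng) (e : E) (h : p.start = rng e) :
    (p.cons e h).tail e rfl = p := by
  ext1
  · exact h.symm
  · rfl

noncomputable def someEdgeFrom (src : E → V) (u : V) : Option E :=
  if h : ∃ e, src e = u then some h.choose else none

theorem src_of_someEdgeFrom {u : V} {e : E} (h : someEdgeFrom src u = some e) : src e = u := by
  unfold someEdgeFrom at h
  split_ifs at h with hu
  cases h
  exact hu.choose_spec

theorem not_regular_of_someEdgeFrom {u : V} (h : someEdgeFrom src u = none) :
    ¬ IsRegularVertex src u := by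
  unfold someEdgeFrom at h
  split_ifs at h with hu
  exact fun hreg => hreg.1 fun e he => hu ⟨e, he⟩

/-- The path starting at `v` that keeps following an arbitrary outgoing edge until it reaches a
sink. -/
noncomputable def greedy (src rng : E → V) (v : V) : BoundaryPath src rng where
  start := v
  edge n := Nat.rec (someEdgeFrom src v) (fun _ o => o.bind fun e => someEdgeFrom src (rng e)) n
  src_edge_zero _ := src_of_someEdgeFrom
  edge_succ n e he := by
    obtain ⟨f, hf, hfe⟩ := Option.bind_eq_some_iff.1 he
    exact ⟨f, hf, (src_of_someEdgeFrom hfe).symm⟩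
  not_regular_start := not_regular_of_someEdgeFrom
  not_regular_end n e he hn := by
    simp only [he] at hn
    exact not_regular_of_someEdgeFrom hn

noncomputable def vtxMap (v : V) (p : BoundaryPath src rng) : Option (BoundaryPath src rng) :=
  if p.start = v then some p else none

noncomputable def edgMap (e : E) (p : BoundaryPath src rng) : Option (BoundaryPath src rng) :=
  if h : p.start = rng e then some (p.cons e h) else none

noncomputable def gheMap (e : E) (p : BoundaryPath src rng) : Option (BoundaryPath src rng) :=
  if h : p.edge 0 = some e then some (p.tail e h) else none

variable (K : Type) [Field K]

noncomputable def partialAct (f : BoundaryPath src rng → Option (BoundaryPath src rng)) :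
    Module.End K (BoundaryPath src rng →₀ K) :=
  Finsupp.lsum K fun p => (f p).elim 0 Finsupp.lsingle

variable {K}

theorem partialAct_single (f : BoundaryPath src rng → Option (BoundaryPath src rng))
    (p : BoundaryPath src rng) (c : K) :
    partialAct K f (Finsupp.single p c) = (f p).elim 0 fun q => Finsupp.single q c := by
  rw [partialAct, Finsupp.lsum_single]
  cases f p <;> rfl

theorem partialAct_mul (f g : BoundaryPath src rng → Option (BoundaryPath src rng)) :
    partialAct K f * partialAct K g = partialAct K fun p => (g p).bind f := by
  refine Finsupp.lhom_ext fun p c => ?_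
  rw [Module.End.mul_apply, partialAct_single, partialAct_single]
  cases g p <;> simp [partialAct_single]

theorem partialAct_none : partialAct K (fun _ : BoundaryPath src rng => none) = 0 :=
  Finsupp.lhom_ext fun p c => partialAct_single _ p c

variable (K src rng) in
noncomputable def freeRep :
    FreeAlgebra K (V ⊕ E ⊕ E) →ₐ[K] Module.End K (BoundaryPath src rng →₀ K) :=
  FreeAlgebra.lift K <| Sum.elim (fun v => partialAct K (vtxMap v))
    (Sum.elim (fun e => partialAct K (edgMap e)) (fun e => partialAct K (gheMap e)))

theorem freeRep_vtx (v : V) : freeRep src rng K (vtx K V E v) = partialAct K (vtxMap v) :=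
  FreeAlgebra.lift_ι_apply _ _

theorem freeRep_edg (e : E) : freeRep src rng K (edg K V E e) = partialAct K (edgMap e) :=
  FreeAlgebra.lift_ι_apply _ _

theorem freeRep_ghe (e : E) : freeRep src rng K (ghe K V E e) = partialAct K (gheMap e) :=
  FreeAlgebra.lift_ι_apply _ _

theorem gheMap_bind_edgMap (e : E) (p : BoundaryPath src rng) :
    (gheMap e p).bind (edgMap e) = if p.edge 0 = some e then some p else none := by
  unfold gheMap
  split_ifs with h
  · simp [edgMap, cons_tail]
  · rfl

theorem partialAct_vtxMap_eq_sum (v : V) (hv : IsRegularVertex src v) :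
    partialAct K (vtxMap (src := src) (rng := rng) v) =
      ∑ e ∈ (Set.not_infinite.mp hv.2).toFinset,
        partialAct K (edgMap e) * partialAct K (gheMap e) := by
  refine Finsupp.lhom_ext fun p c => ?_
  simp only [partialAct_mul, LinearMap.sum_apply, partialAct_single, gheMap_bind_edgMap, vtxMap]
  rcases hp : p.edge 0 with _ | e₀
  · have : p.start ≠ v := fun h => p.not_regular_start hp (h ▸ hv)
    simp [this]
  · have : p.start = v ↔ src e₀ = v := by rw [p.src_edge_zero e₀ hp]
    simp [this, apply_ite
      (fun o : Option (BoundaryPath src rng) => o.elim 0 fun q => Finsupp.single q c)]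

theorem sum_partialAct_vtxMap [Fintype V] :
    ∑ v, partialAct K (vtxMap (src := src) (rng := rng) v) = 1 := by
  refine Finsupp.lhom_ext fun p c => ?_
  simp [partialAct_single, vtxMap, apply_ite
    (fun o : Option (BoundaryPath src rng) => o.elim 0 fun q => Finsupp.single q c)]

theorem freeRep_rel [Fintype V] {x y : FreeAlgebra K (V ⊕ E ⊕ E)}
    (h : LeavittRel K V E src rng x y) : freeRep src rng K x = freeRep src rng K y := by
  cases h with
  | vtx_same v =>
    rw [map_mul, freeRep_vtx, partialAct_mul]
    congr 1; funext p
    unfold vtxMap; split_ifs <;> simp [*]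
  | vtx_ne v v' hne =>
    rw [map_mul, freeRep_vtx, freeRep_vtx, partialAct_mul, map_zero, ← partialAct_none]
    congr 1; funext p
    unfold vtxMap; split_ifs <;> simp_all [eq_comm]
  | src_edge e =>
    rw [map_mul, freeRep_vtx, freeRep_edg, partialAct_mul]
    congr 1; funext p
    unfold edgMap; split_ifs <;> simp [vtxMap]
  | edge_rng e =>
    rw [map_mul, freeRep_vtx, freeRep_edg, partialAct_mul]
    congr 1; funext p
    unfold vtxMap; split_ifs <;> simp [edgMap, *]
  | rng_ghost e =>
    rw [map_mul, freeRep_vtx, freeRep_ghe, partialAct_mul]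
    congr 1; funext p
    unfold gheMap; split_ifs <;> simp [vtxMap]
  | ghost_src e =>
    rw [map_mul, freeRep_vtx, freeRep_ghe, partialAct_mul]
    congr 1; funext p
    unfold vtxMap; split_ifs with h
    · simp
    · simp [gheMap, show p.edge 0 ≠ some e from fun h' => h (p.src_edge_zero e h').symm]
  | ck1_same e =>
    rw [map_mul, freeRep_ghe, freeRep_edg, freeRep_vtx, partialAct_mul]
    congr 1; funext p
    unfold edgMap; split_ifs with h <;> simp [gheMap, vtxMap, tail_cons, h]
  | ck1_ne e f hne =>
    rw [map_mul, freeRep_ghe, freeRep_edg, partialAct_mul, map_zero, ← partialAct_none]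
    congr 1; funext p
    unfold edgMap; split_ifs <;> simp [gheMap, Ne.symm hne]
  | ck2 v hreg =>
    simpa only [freeRep_vtx, map_sum, map_mul, freeRep_edg, freeRep_ghe]
      using partialAct_vtxMap_eq_sum v hreg
  | unit =>
    simpa only [map_sum, map_one, freeRep_vtx] using sum_partialAct_vtxMap

variable (K src rng) in
noncomputable def lpaRep [Fintype V] :
    LPA K V E src rng →ₐ[K] Module.End K (BoundaryPath src rng →₀ K) :=
  RingQuot.liftAlgHom K ⟨freeRep src rng K, fun _ _ => freeRep_rel⟩

end BoundaryPath

theorem LPA.Vtx_ne_zero {K V E : Type} [Field K] [Fintype V] {src rng : E → V} (v : V) :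
    Vtx K V E src rng v ≠ 0 := by
  intro h
  have := congrArg (BoundaryPath.lpaRep src rng K · (Finsupp.single (.greedy src rng v) 1)) h
  simp [BoundaryPath.lpaRep, Vtx, BoundaryPath.freeRep_vtx, BoundaryPath.partialAct_single,
    BoundaryPath.vtxMap, BoundaryPath.greedy] at this

theorem RingQuot.commute_of_commute_ι {R X : Type*} [CommSemiring R]
    {r : FreeAlgebra R X → FreeAlgebra R X → Prop}
    (h : ∀ x y, Commute (RingQuot.mkAlgHom R r (FreeAlgebra.ι R x))
      (RingQuot.mkAlgHom R r (FreeAlgebra.ι R y))) (a b : RingQuot r) : Commute a b := by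
  have hgen : Algebra.adjoin R (Set.range (RingQuot.mkAlgHom R r ∘ FreeAlgebra.ι R)) = ⊤ := by
    rw [Algebra.adjoin_range_eq_range_freeAlgebra_lift, FreeAlgebra.lift_comp_ι,
      AlgHom.range_eq_top]
    exact RingQuot.mkAlgHom_surjective R r
  refine Algebra.commute_of_mem_adjoin_of_forall_mem_commute (hgen ▸ Algebra.mem_top) ?_
  rintro _ ⟨y, rfl⟩
  refine (Algebra.commute_of_mem_adjoin_of_forall_mem_commute (hgen ▸ Algebra.mem_top) ?_).symm
  rintro _ ⟨x, rfl⟩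
  exact h y x

namespace LPA

variable {K V E : Type} [Field K] [Fintype V]

theorem Edg_mul_Ghe_of_unique {src rng : E → V} {e : E} (he : ∀ f, src f = src e → f = e) :
    Edg K V E src rng e * Ghe K V E src rng e = Vtx K V E src rng (src e) := by
  have hreg : IsRegularVertex src (src e) :=
    ⟨fun h => h e rfl, Set.not_infinite.2 ((Set.finite_singleton e).subset fun f hf => he f hf)⟩
  have : (Set.not_infinite.mp hreg.2).toFinset = {e} := by
    ext f
    simpa using ⟨he f, fun h => h ▸ rfl⟩
  rw [Vtx_eq_sum_Edg_mul_Ghe _ hreg, this, Finset.sum_singleton]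

variable (K V E) in
noncomputable def generator (src rng : E → V) : V ⊕ E ⊕ E → LPA K V E src rng :=
  Sum.elim (Vtx K V E src rng) (Sum.elim (Edg K V E src rng) (Ghe K V E src rng))

theorem mkAlgHom_ι {src rng : E → V} (z : V ⊕ E ⊕ E) :
    RingQuot.mkAlgHom K (LeavittRel K V E src rng) (FreeAlgebra.ι K z) =
      generator K V E src rng z := by
  rcases z with _ | _ | _ <;> rfl

section Loops

variable {s : E → V}

/-- The vertex at which a generator sits, in a graph all of whose edges are loops. -/
def home (s : E → V) : V ⊕ E ⊕ E → V := Sum.elim id (Sum.elim s s)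

theorem Vtx_mul_generator [DecidableEq V] (u : V) (z : V ⊕ E ⊕ E) :
    Vtx K V E s s u * generator K V E s s z =
      if u = home s z then generator K V E s s z else 0 := by
  rcases z with v | e | e <;> simp only [generator, home, Sum.elim_inl, Sum.elim_inr, id]
  · rw [Vtx_mul_Vtx]; split_ifs with h <;> simp [h]
  · exact Vtx_mul_Edg u e
  · exact Vtx_mul_Ghe u e

theorem generator_mul_Vtx [DecidableEq V] (u : V) (z : V ⊕ E ⊕ E) :
    generator K V E s s z * Vtx K V E s s u =
      if u = home s z then generator K V E s s z else 0 := by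
  rcases z with v | e | e <;> simp only [generator, home, Sum.elim_inl, Sum.elim_inr, id]
  · rw [Vtx_mul_Vtx]; exact if_congr eq_comm rfl rfl
  · exact Edg_mul_Vtx u e
  · exact Ghe_mul_Vtx u e

theorem generator_mul_generator_of_home_ne {z z' : V ⊕ E ⊕ E} (h : home s z ≠ home s z') :
    generator K V E s s z * generator K V E s s z' = 0 := by
  classical
  calc generator K V E s s z * generator K V E s s z'
      = generator K V E s s z * Vtx K V E s s (home s z) * generator K V E s s z' := by
        rw [generator_mul_Vtx, if_pos rfl]
    _ = 0 := by rw [mul_assoc, Vtx_mul_generator, if_neg h, mul_zero]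

theorem commute_Vtx_generator (u : V) (z : V ⊕ E ⊕ E) :
    Commute (Vtx K V E s s u) (generator K V E s s z) := by
  classical
  rw [Commute, SemiconjBy, Vtx_mul_generator, generator_mul_Vtx]

theorem commute_Edg_Ghe (hs : Function.Injective s) (e : E) :
    Commute (Edg K V E s s e) (Ghe K V E s s e) := by
  classical
  rw [Commute, SemiconjBy, Edg_mul_Ghe_of_unique fun f hf => hs hf, Ghe_mul_Edg, if_pos rfl]

theorem commute_generator (hs : Function.Injective s) (z z' : V ⊕ E ⊕ E) :
    Commute (generator K V E s s z) (generator K V E s s z') := by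
  by_cases h : home s z = home s z'
  swap
  · exact (generator_mul_generator_of_home_ne h).trans
      (generator_mul_generator_of_home_ne (Ne.symm h)).symm
  rcases z with v | e | e
  · exact commute_Vtx_generator _ _
  all_goals rcases z' with v' | e' | e'
  all_goals first
    | exact (commute_Vtx_generator _ _).symm
    | obtain rfl : e = e' := hs h
  · exact Commute.refl _
  · exact commute_Edg_Ghe hs e
  · exact (commute_Edg_Ghe hs e).symm
  · exact Commute.refl _

theorem commute_of_injective (hs : Function.Injective s) (x y : LPA K V E s s) : Commute x y :=
  RingQuot.commute_of_commute_ι (fun z z' => by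
    simpa only [mkAlgHom_ι] using commute_generator hs z z') x y

end Loops

variable {src rng : E → V}

theorem Edg_mul_Ghe_ne_zero (e : E) : Edg K V E src rng e * Ghe K V E src rng e ≠ 0 := by
  classical
  intro h
  have hsandwich : Ghe K V E src rng e * (Edg K V E src rng e * Ghe K V E src rng e) *
      Edg K V E src rng e = Vtx K V E src rng (rng e) := by
    rw [← mul_assoc, Ghe_mul_Edg, if_pos rfl, Vtx_rng_mul_Ghe, Ghe_mul_Edg, if_pos rfl]
  rw [h, mul_zero, zero_mul] at hsandwich
  exact Vtx_ne_zero (rng e) hsandwich.symm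

theorem isMatrixUnits_of_src_ne_rng {e : E} (he : src e ≠ rng e) :
    IsMatrixUnits fun i j : Fin 2 =>
      ![Edg K V E src rng e, Vtx K V E src rng (rng e)] i *
        ![Ghe K V E src rng e, Vtx K V E src rng (rng e)] j := by
  classical
  refine isMatrixUnits_mul (p := Vtx K V E src rng (rng e)) (fun i j => ?_) (fun j => ?_)
  · fin_cases i <;> fin_cases j <;>
      simp [Ghe_mul_Edg, Ghe_mul_Vtx, Vtx_mul_Edg, Vtx_mul_Vtx, he.symm]
  · fin_cases j <;> simp [Vtx_rng_mul_Ghe, Vtx_mul_Vtx]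

theorem isMatrixUnits_of_rng_eq {ι : Type*} [DecidableEq ι] {g : ι → E}
    (hg : Function.Injective g) {u : V} (hu : ∀ i, rng (g i) = u) :
    IsMatrixUnits fun i j => Edg K V E src rng (g i) * Ghe K V E src rng (g j) := by
  classical
  refine isMatrixUnits_mul (p := Vtx K V E src rng u) (fun i j => ?_) (fun j => ?_)
  · simp [Ghe_mul_Edg, hg.eq_iff, hu]
  · rw [← hu j, Vtx_rng_mul_Ghe]

theorem exists_isMatrixUnits_of_not_commute (hnc : ∃ x y : LPA K V E src rng, x * y ≠ y * x) :
    ∃ w : Fin 2 → Fin 2 → LPA K V E src rng, IsMatrixUnits w ∧ w 0 0 ≠ 0 := by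
  by_cases hsrc : ∃ e, src e ≠ rng e
  · obtain ⟨e, he⟩ := hsrc
    exact ⟨_, isMatrixUnits_of_src_ne_rng he, Edg_mul_Ghe_ne_zero e⟩
  by_cases hrng : ∃ e f, e ≠ f ∧ rng e = rng f
  · obtain ⟨e, f, hef, hr⟩ := hrng
    refine ⟨_, isMatrixUnits_of_rng_eq (g := ![e, f]) (u := rng e) ?_ ?_,
      Edg_mul_Ghe_ne_zero e⟩
    · intro i j
      fin_cases i <;> fin_cases j <;> simp [hef, Ne.symm hef]
    · simp [Fin.forall_fin_two, hr]
  push Not at hsrc hrng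
  obtain rfl : src = rng := funext hsrc
  obtain ⟨x, y, hxy⟩ := hnc
  exact (hxy (commute_of_injective (fun e f h => by_contra fun hef => hrng e f hef h) x y)).elim

end LPA

/-- Let `K` be a field of characteristic `0` and `E` a directed graph with finitely
many vertices such that the Leavitt path algebra `L_K(E)` is noncommutative. Then the
multiplicative group of units of `L_K(E)` contains a non-cyclic free subgroup: there
are units `a, b` such that the group homomorphism from the free group on two
generators (indexed by `Bool`) sending the generators to `a` and `b` is injective. -/
theorem units_of_LPA_contains_free_subgroup
    (K V E : Type) [Field K] [CharZero K] [Fintype V] (src rng : E → V)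
    (hnc : ∃ x y : LPA K V E src rng, x * y ≠ y * x) :
    ∃ a b : (LPA K V E src rng)ˣ,
      Function.Injective (FreeGroup.lift fun t : Bool => if t then a else b) := by
  obtain ⟨w, hw, h₀⟩ := LPA.exists_isMatrixUnits_of_not_commute hnc
  exact hw.exists_free_units K h₀
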